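/- Let P' be a finite graded poset of rank ρ and, for each alphabet size q ≥ ρ + 1 with a packed increasing tableau, suppose every K-promotion orbit of packed tableaux in Inc^q(P') has cardinality dividing some fixed m_q. If c is a nonnegative integer such that m_q divides q + c for every q with ρ + 1 ≤ q ≤ |P'|, then in the ordinal sum P' ⊕ 𝐜 every K-promotion orbit of packed increasing tableaux (which necessarily have height q + c for some ρ+1 ≤ q ≤ |P'|) has cardinality dividing its alphabet size. (Special instance: packed tableaux on P' ⊕ 𝐜 restrict to packed tableaux on P' with the top chain labeled by the largest c values, and the orbit structures agree with alphabet size increased by c.) -/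

import Mathlib

/-!
A packed increasing tableau of height `q'` on `P ⊕ₗ Fin c` must put the `c` largest labels on
the chain, so it is the extension `extendChain c q T` of a packed increasing tableau `T` of
height `q = q' - c` on `P`. `K`-promotion commutes with this extension: the swaps
`kstep 2, …, kstep q` never touch the chain, after them every hole (label `1`) sits at a maximal
element of `P`, `kstep (q + 1)` moves the holes onto the bottom of the chain, and the remaining
swaps carry the hole to its top, which the final decrement relabels `q + c`. Hence the orbit of
`extendChain c q T` has the size of the orbit of `T`, which divides `m q ∣ q + c = q'`. The bounds
`ρ < q ≤ |P|` hold because labels strictly exceed ranks and every label is attained; when `P`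
is empty the tableau is unique and its orbit is a point.
-/

open Classical in
/-- One swapping step of `K`-promotion: on each connected component of the Hasse
diagram of `P` restricted to elements labeled `1` or `i` that contains both labels,
swap the labels `1` and `i`. -/
noncomputable def kstep {P : Type*} [PartialOrder P] (i : ℕ) (T : P → ℕ) : P → ℕ :=
  fun p =>
    if T p = 1 ∧ ∃ y, Relation.ReflTransGen
        (fun x z => (x ⋖ z ∨ z ⋖ x) ∧ (T x = 1 ∨ T x = i) ∧ (T z = 1 ∨ T z = i)) p y ∧
        T y = i then i
    else if T p = i ∧ ∃ y, Relation.ReflTransGen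
        (fun x z => (x ⋖ z ∨ z ⋖ x) ∧ (T x = 1 ∨ T x = i) ∧ (T z = 1 ∨ T z = i)) p y ∧
        T y = 1 then 1
    else T p

open Classical in
/-- `K`-promotion of an increasing tableau of height `q`: perform the swapping steps
for `i = 2, …, q` in order, then cyclically decrement all labels (`1 ↦ q`,
`j ↦ j - 1` otherwise). -/
noncomputable def kpromo {P : Type*} [PartialOrder P] (q : ℕ) (T : P → ℕ) : P → ℕ :=
  fun p =>
    if (List.range' 2 (q - 1)).foldl (fun S i => kstep i S) T p = 1 then q
    else (List.range' 2 (q - 1)).foldl (fun S i => kstep i S) T p - 1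

def kstepAdj {P : Type*} [PartialOrder P] (i : ℕ) (T : P → ℕ) (x z : P) : Prop :=
  (x ⋖ z ∨ z ⋖ x) ∧ (T x = 1 ∨ T x = i) ∧ (T z = 1 ∨ T z = i)

section KStep

variable {P : Type*} [PartialOrder P] {i j : ℕ} {T : P → ℕ} {p y : P}

instance : Std.Symm (kstepAdj i T) :=
  ⟨fun _ _ ⟨hcov, hx, hz⟩ => ⟨hcov.symm, hz, hx⟩⟩

open Classical in
lemma kstep_apply (i : ℕ) (T : P → ℕ) (p : P) :
    kstep i T p = if T p = 1 ∧ ∃ y, Relation.ReflTransGen (kstepAdj i T) p y ∧ T y = i then i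
      else if T p = i ∧ ∃ y, Relation.ReflTransGen (kstepAdj i T) p y ∧ T y = 1 then 1
      else T p := rfl

lemma kstep_of_ne (h1 : T p ≠ 1) (hi : T p ≠ i) : kstep i T p = T p := by
  rw [kstep_apply, if_neg (by tauto), if_neg (by tauto)]

lemma kstep_eq_one_or (h : T p = 1 ∨ T p = i) : kstep i T p = 1 ∨ kstep i T p = i := by
  rw [kstep_apply]; split_ifs <;> tauto

lemma kstep_of_one_of_reach (h : T p = 1)
    (hr : ∃ y, Relation.ReflTransGen (kstepAdj i T) p y ∧ T y = i) : kstep i T p = i := by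
  rw [kstep_apply, if_pos ⟨h, hr⟩]

lemma kstep_of_one_of_not_reach (h : T p = 1)
    (hr : ¬ ∃ y, Relation.ReflTransGen (kstepAdj i T) p y ∧ T y = i) : kstep i T p = 1 := by
  rw [kstep_apply]; split_ifs with h₁
  exacts [absurd h₁.2 hr, rfl, h]

lemma kstep_of_eq_of_reach (h : T p = i)
    (hr : ∃ y, Relation.ReflTransGen (kstepAdj i T) p y ∧ T y = 1) : kstep i T p = 1 := by
  rw [kstep_apply]; split_ifs with h₁ h₂
  exacts [h.symm.trans h₁.1, rfl, absurd ⟨h, hr⟩ h₂]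

lemma kstep_of_eq_of_not_reach (h : T p = i)
    (hr : ¬ ∃ y, Relation.ReflTransGen (kstepAdj i T) p y ∧ T y = 1) : kstep i T p = i := by
  rw [kstep_apply]; split_ifs with h₁ h₂
  exacts [rfl, absurd h₂.2 hr, h]

lemma kstep_of_one_of_adj (h : T p = 1) (hadj : p ⋖ y ∨ y ⋖ p) (hy : T y = i) :
    kstep i T p = i :=
  kstep_of_one_of_reach h ⟨y, .single ⟨hadj, .inl h, .inr hy⟩, hy⟩

lemma kstep_of_eq_of_adj (h : T p = i) (hadj : p ⋖ y ∨ y ⋖ p) (hy : T y = 1) :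
    kstep i T p = 1 :=
  kstep_of_eq_of_reach h ⟨y, .single ⟨hadj, .inr h, .inl hy⟩, hy⟩

lemma exists_kstep_eq (h : T p = j) : ∃ y, kstep i T y = j := by
  by_cases hj1 : j = 1
  · subst hj1
    by_cases hr : ∃ y, Relation.ReflTransGen (kstepAdj i T) p y ∧ T y = i
    · obtain ⟨y, hpy, hy⟩ := hr
      exact ⟨y, kstep_of_eq_of_reach hy ⟨p, Std.Symm.symm _ _ hpy, h⟩⟩
    · exact ⟨p, kstep_of_one_of_not_reach h hr⟩
  by_cases hji : j = i
  · subst hji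
    by_cases hr : ∃ y, Relation.ReflTransGen (kstepAdj j T) p y ∧ T y = 1
    · obtain ⟨y, hpy, hy⟩ := hr
      exact ⟨y, kstep_of_one_of_reach hy ⟨p, Std.Symm.symm _ _ hpy, h⟩⟩
    · exact ⟨p, kstep_of_eq_of_not_reach h hr⟩
  exact ⟨p, (kstep_of_ne (by omega) (by omega)).trans h⟩

end KStep

/-- What survives of a packed increasing tableau through the swaps `kstep 2, …, kstep i`,
the labels `1` being the holes that have moved up. -/
structure IsKStage {P : Type*} [PartialOrder P] (q i : ℕ) (S : P → ℕ) : Prop where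
  bounds : ∀ p, 1 ≤ S p ∧ S p ≤ q
  surj : ∀ j, 1 ≤ j → j ≤ q → ∃ p, S p = j
  lt_of_ne_one : ∀ x y, x < y → S x ≠ 1 → S y ≠ 1 → S x < S y
  lt_of_covBy : ∀ x y, x ⋖ y → S x = 1 → i < S y
  le_of_lt : ∀ x y, x < y → S y = 1 → S x ≠ 1 → S x ≤ i

namespace IsKStage

variable {P : Type*} [PartialOrder P] {q i : ℕ} {S : P → ℕ} {x y : P}

lemma lt_of_lt_of_eq_one [IsStronglyAtomic P] (h : IsKStage q i S) (hi : 1 ≤ i) (hxy : x < y)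
    (hx : S x = 1) :
    i < S y ∧ (S y = i + 1 → x ⋖ y) := by
  obtain ⟨z, hxz, hzy⟩ := exists_covBy_le_of_lt hxy
  have hz := h.lt_of_covBy x z hxz hx
  rcases hzy.eq_or_lt with rfl | hzy
  · exact ⟨hz, fun _ => hxz⟩
  have hy : S y ≠ 1 := fun hy => by have := h.le_of_lt z y hzy hy (by omega); omega
  have := h.lt_of_ne_one z y hzy (by omega) hy
  omega

lemma kstep_lt [IsStronglyAtomic P] (h : IsKStage q i S) (hi : 1 ≤ i) (hxy : x < y)
    (hy : kstep (i + 1) S y ≠ 1) : kstep (i + 1) S x < kstep (i + 1) S y := by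
  have hSx := h.bounds x
  by_cases hx1 : S x = 1
  · obtain ⟨hlt, hcov⟩ := h.lt_of_lt_of_eq_one hi hxy hx1
    have hyi : S y ≠ i + 1 := fun hyi => hy (kstep_of_eq_of_adj hyi (.inr (hcov hyi)) hx1)
    rw [kstep_of_ne (T := S) (p := y) (by omega) hyi]
    rcases kstep_eq_one_or (i := i + 1) (.inl hx1) with h' | h' <;> omega
  by_cases hy1 : S y = 1
  · have := h.le_of_lt x y hxy hy1 hx1
    rw [kstep_of_ne (T := S) (p := x) hx1 (by omega)]
    rcases kstep_eq_one_or (i := i + 1) (.inl hy1) with h' | h' <;> omega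
  have hlt := h.lt_of_ne_one x y hxy hx1 hy1
  have hSy := kstep_eq_one_or (i := i + 1) (T := S) (p := y)
  have hSx := kstep_eq_one_or (i := i + 1) (T := S) (p := x)
  by_cases hyi : S y = i + 1
  · rw [kstep_of_ne (T := S) (p := x) hx1 (by omega)]
    rcases hSy (.inr hyi) with h' | h' <;> omega
  rw [kstep_of_ne (T := S) (p := y) hy1 hyi]
  by_cases hxi : S x = i + 1
  · rcases hSx (.inr hxi) with h' | h' <;> omega
  rwa [kstep_of_ne hx1 hxi]

lemma kstep_lt_of_covBy (h : IsKStage q i S) (hi : 1 ≤ i) (hxy : x ⋖ y)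
    (hx : kstep (i + 1) S x = 1) :
    i + 1 < kstep (i + 1) S y := by
  by_cases hx1 : S x = 1
  · have hlt := h.lt_of_covBy x y hxy hx1
    have hyi : S y ≠ i + 1 := fun hyi => by
      rw [kstep_of_one_of_adj hx1 (.inl hxy) hyi] at hx; omega
    rw [kstep_of_ne (by omega) hyi]; omega
  have hxi : S x = i + 1 := by
    by_contra hxi; rw [kstep_of_ne hx1 hxi] at hx; exact hx1 hx
  have hy1 : S y ≠ 1 := fun hy1 => by have := h.le_of_lt x y hxy.lt hy1 hx1; omega
  have := h.lt_of_ne_one x y hxy.lt hx1 hy1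
  rw [kstep_of_ne hy1 (by omega)]; omega

lemma kstep_le_of_lt (h : IsKStage q i S) (hi : 1 ≤ i) (hxy : x < y)
    (hy : kstep (i + 1) S y = 1) :
    kstep (i + 1) S x ≤ i + 1 := by
  have hy1 : S y = 1 ∨ S y = i + 1 := by
    by_contra hy1; push Not at hy1; rw [kstep_of_ne hy1.1 hy1.2] at hy; exact hy1.1 hy
  have hx : S x ≤ i + 1 := by
    by_cases hx1 : S x = 1
    · omega
    rcases hy1 with hy1 | hy1
    · have := h.le_of_lt x y hxy hy1 hx1; omega
    · have := h.lt_of_ne_one x y hxy hx1 (by omega); omega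
  by_cases hxi : S x = 1 ∨ S x = i + 1
  · rcases kstep_eq_one_or hxi with h' | h' <;> omega
  push Not at hxi
  rw [kstep_of_ne hxi.1 hxi.2]; exact hx

lemma kstep_succ [IsStronglyAtomic P] (h : IsKStage q i S) (hi : 1 ≤ i) (hq : i + 1 ≤ q) :
    IsKStage q (i + 1) (kstep (i + 1) S) where
  bounds p := by
    have := h.bounds p
    by_cases hp : S p = 1 ∨ S p = i + 1
    · rcases kstep_eq_one_or hp with h' | h' <;> omega
    push Not at hp
    rw [kstep_of_ne hp.1 hp.2]; exact this
  surj j hj hjq := by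
    obtain ⟨p, hp⟩ := h.surj j hj hjq
    exact exists_kstep_eq hp
  lt_of_ne_one _ _ hxy _ hy := h.kstep_lt hi hxy hy
  lt_of_covBy _ _ hxy hx := h.kstep_lt_of_covBy hi hxy hx
  le_of_lt _ _ hxy hy _ := h.kstep_le_of_lt hi hxy hy

end IsKStage

structure IsPackedTableau {P : Type*} [PartialOrder P] (q : ℕ) (T : P → ℕ) : Prop where
  bounds : ∀ p, 1 ≤ T p ∧ T p ≤ q
  strictMono : StrictMono T
  surj : ∀ j, 1 ≤ j → j ≤ q → ∃ p, T p = j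

noncomputable def kswaps {P : Type*} [PartialOrder P] (q : ℕ) (T : P → ℕ) : P → ℕ :=
  (List.range' 2 (q - 1)).foldl (fun S i => kstep i S) T

section KPromo

variable {P : Type*} [PartialOrder P] {q : ℕ} {S T : P → ℕ}

lemma kpromo_apply (q : ℕ) (T : P → ℕ) (p : P) :
    kpromo q T p = if kswaps q T p = 1 then q else kswaps q T p - 1 := rfl

lemma IsPackedTableau.isKStage (hT : IsPackedTableau q T) : IsKStage q 1 T where
  bounds := hT.bounds
  surj := hT.surj
  lt_of_ne_one _ _ hxy _ _ := hT.strictMono hxy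
  lt_of_covBy _ _ hxy hx := hx ▸ hT.strictMono hxy.lt
  le_of_lt _ _ hxy hy _ := by have := hT.strictMono hxy; omega

variable [IsStronglyAtomic P]

lemma IsKStage.foldl_kstep (h : IsKStage q 1 S) {n : ℕ} (hn : n + 1 ≤ q) :
    IsKStage q (n + 1) ((List.range' 2 n).foldl (fun S i => kstep i S) S) := by
  induction n with
  | zero => exact h
  | succ n ih =>
    rw [List.range'_1_concat, List.foldl_concat, show 2 + n = n + 1 + 1 by omega]
    exact (ih (by omega)).kstep_succ (by omega) hn

lemma IsPackedTableau.isKStage_kswaps (hT : IsPackedTableau q T) (hq : 1 ≤ q) :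
    IsKStage q q (kswaps q T) := by
  have := hT.isKStage.foldl_kstep (n := q - 1) (by omega)
  rwa [Nat.sub_add_cancel hq] at this

lemma IsKStage.isMax_of_eq_one (h : IsKStage q q S) (hq : 1 ≤ q) {p : P} (hp : S p = 1) :
    IsMax p :=
  isMax_iff_forall_not_lt.2 fun y hpy => by
    have := (h.lt_of_lt_of_eq_one hq hpy hp).1; have := (h.bounds y).2; omega

lemma isPackedTableau_kpromo (hT : IsPackedTableau q T) : IsPackedTableau q (kpromo q T) := by
  rcases Nat.eq_zero_or_pos q with rfl | hq
  · have : IsEmpty P := ⟨fun p => by have := hT.bounds p; omega⟩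
    rwa [Subsingleton.elim (kpromo 0 T) T]
  have hS := hT.isKStage_kswaps hq
  refine ⟨fun p => ?_, fun x y hxy => ?_, fun j hj hjq => ?_⟩
  · have := hS.bounds p
    rw [kpromo_apply]; split_ifs <;> omega
  · have hx : kswaps q T x ≠ 1 := fun hx => (hS.isMax_of_eq_one hq hx).not_lt hxy
    have := hS.bounds x
    rw [kpromo_apply, kpromo_apply, if_neg hx]
    split_ifs with hy
    · omega
    · have := hS.lt_of_ne_one x y hxy hx hy; omega
  · by_cases hjq' : j = q
    · obtain ⟨p, hp⟩ := hS.surj 1 le_rfl hq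
      exact ⟨p, by rw [kpromo_apply, if_pos hp, hjq']⟩
    · obtain ⟨p, hp⟩ := hS.surj (j + 1) (by omega) (by omega)
      exact ⟨p, by rw [kpromo_apply, if_neg (by omega)]; omega⟩

lemma isPackedTableau_iterate_kpromo (hT : IsPackedTableau q T) (n : ℕ) :
    IsPackedTableau q ((kpromo q)^[n] T) := by
  induction n with
  | zero => exact hT
  | succ n ih => rw [Function.iterate_succ_apply']; exact isPackedTableau_kpromo ih

end KPromo

section Height

variable {P : Type*} [PartialOrder P] {q : ℕ} {T : P → ℕ}

lemma IsPackedTableau.rank_lt [WellFoundedLT P] [IsStronglyCoatomic P] {rk : P → ℕ}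
    (hrmin : ∀ x : P, (∀ y, ¬ y < x) → rk x = 0) (hrcov : ∀ x y : P, x ⋖ y → rk y = rk x + 1)
    (hT : IsPackedTableau q T) (x : P) : rk x < T x := by
  induction x using WellFoundedLT.induction with
  | _ x ih =>
    by_cases hx : ∀ y, ¬ y < x
    · rw [hrmin x hx]; exact (hT.bounds x).1
    push Not at hx
    obtain ⟨y, hy⟩ := hx
    obtain ⟨z, -, hzx⟩ := exists_le_covBy_of_lt hy
    have := ih z hzx.lt
    have := hT.strictMono hzx.lt
    rw [hrcov z x hzx]; omega

lemma IsPackedTableau.rank_lt_height [Finite P] [Nonempty P] {ρ : ℕ} {rk : P → ℕ}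
    (hrmin : ∀ x : P, (∀ y, ¬ y < x) → rk x = 0) (hrcov : ∀ x y : P, x ⋖ y → rk y = rk x + 1)
    (hrmax : ∀ x : P, (∀ y, ¬ x < y) → rk x = ρ) (hT : IsPackedTableau q T) : ρ < q := by
  obtain ⟨x, -, hx⟩ := Finite.exists_le_maximal (p := fun _ : P => True)
    (a := Classical.arbitrary P) trivial
  rw [← hrmax x fun y hxy => hxy.not_ge (hx.2 trivial hxy.le)]
  exact (hT.rank_lt hrmin hrcov x).trans_le (hT.bounds x).2

lemma IsPackedTableau.height_le_card [Fintype P] (hT : IsPackedTableau q T) :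
    q ≤ Fintype.card P := by
  have hsurj : Set.SurjOn T (Finset.univ : Finset P) (Finset.Icc 1 q) := fun j hj => by
    obtain ⟨p, hp⟩ := hT.surj j (Finset.mem_Icc.1 hj).1 (Finset.mem_Icc.1 hj).2
    exact ⟨p, Finset.mem_coe.2 (Finset.mem_univ p), hp⟩
  simpa using Finset.card_le_card_of_surjOn T hsurj

end Height

open Sum

namespace Sum.Lex

variable {α β : Type*}

@[elab_as_elim]
lemma induction {motive : α ⊕ₗ β → Prop} (inl : ∀ a, motive (inlₗ a))
    (inr : ∀ b, motive (inrₗ b)) (x : α ⊕ₗ β) : motive x := by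
  rcases x with a | b
  exacts [inl a, inr b]

variable [Preorder α] [Preorder β]

lemma inl_covBy_inl_iff {a b : α} : (inlₗ a : α ⊕ₗ β) ⋖ inlₗ b ↔ a ⋖ b := by
  refine ⟨fun h => ⟨inl_lt_inl_iff.1 h.lt, fun c hac hcb =>
    h.2 (inl_lt_inl_iff.2 hac) (inl_lt_inl_iff.2 hcb)⟩, fun h => ⟨inl_lt_inl_iff.2 h.lt, ?_⟩⟩
  intro z haz hzb
  induction z using Sum.Lex.induction with
  | inl c => exact h.2 (inl_lt_inl_iff.1 haz) (inl_lt_inl_iff.1 hzb)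
  | inr c => exact not_inr_lt_inl hzb

lemma inr_covBy_inr_iff {a b : β} : (inrₗ a : α ⊕ₗ β) ⋖ inrₗ b ↔ a ⋖ b := by
  refine ⟨fun h => ⟨inr_lt_inr_iff.1 h.lt, fun c hac hcb =>
    h.2 (inr_lt_inr_iff.2 hac) (inr_lt_inr_iff.2 hcb)⟩, fun h => ⟨inr_lt_inr_iff.2 h.lt, ?_⟩⟩
  intro z haz hzb
  induction z using Sum.Lex.induction with
  | inl c => exact not_inr_lt_inl haz
  | inr c => exact h.2 (inr_lt_inr_iff.1 haz) (inr_lt_inr_iff.1 hzb)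

lemma inl_covBy_inr {a : α} {b : β} (ha : IsMax a) (hb : IsMin b) :
    (inlₗ a : α ⊕ₗ β) ⋖ inrₗ b := by
  refine ⟨inl_lt_inr a b, fun z haz hzb => ?_⟩
  induction z using Sum.Lex.induction with
  | inl c => exact ha.not_lt (inl_lt_inl_iff.1 haz)
  | inr c => exact hb.not_lt (inr_lt_inr_iff.1 hzb)

end Sum.Lex

def extendChain {P : Type*} (c q : ℕ) (T : P → ℕ) : P ⊕ₗ Fin c → ℕ
  | inlₗ p => T p
  | inrₗ k => q + 1 + k

@[simp]
lemma extendChain_inl {P : Type*} (c q : ℕ) (S : P → ℕ) (a : P) :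
    extendChain c q S (inlₗ a) = S a := rfl

@[simp]
lemma extendChain_inr {P : Type*} (c q : ℕ) (S : P → ℕ) (k : Fin c) :
    extendChain c q S (inrₗ k) = q + 1 + k := rfl

lemma extendChain_injective {P : Type*} (c q : ℕ) :
    Function.Injective (extendChain (P := P) c q) :=
  fun _ _ h => funext fun p => congrFun h (inlₗ p)

section ExtendChain

variable {P : Type*} [PartialOrder P] {c q i : ℕ} {S : P → ℕ}

lemma kstepAdj_extendChain_inl_iff (hq : 1 ≤ q) (hi : i ≤ q) {a : P} {z : P ⊕ₗ Fin c} :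
    kstepAdj i (extendChain c q S) (inlₗ a) z ↔ ∃ b, z = inlₗ b ∧ kstepAdj i S a b := by
  induction z using Sum.Lex.induction with
  | inl b => simp [kstepAdj, Sum.Lex.inl_covBy_inl_iff]
  | inr k => simp [kstepAdj]; omega

lemma reflTransGen_kstepAdj_extendChain_inl_iff (hq : 1 ≤ q) (hi : i ≤ q) {a : P}
    {z : P ⊕ₗ Fin c} :
    Relation.ReflTransGen (kstepAdj i (extendChain c q S)) (inlₗ a) z ↔
      ∃ b, z = inlₗ b ∧ Relation.ReflTransGen (kstepAdj i S) a b := by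
  constructor
  · intro h
    induction h with
    | refl => exact ⟨a, rfl, .refl⟩
    | tail _ hyz ih =>
      obtain ⟨b, rfl, hab⟩ := ih
      obtain ⟨b', rfl, hbb'⟩ := (kstepAdj_extendChain_inl_iff hq hi).1 hyz
      exact ⟨b', rfl, hab.tail hbb'⟩
  · rintro ⟨b, rfl, hab⟩
    exact Relation.ReflTransGen.lift inlₗ
      (fun _ y h => (kstepAdj_extendChain_inl_iff hq hi).2 ⟨y, rfl, h⟩) a b hab

lemma kstep_extendChain (hq : 1 ≤ q) (hi : i ≤ q) (S : P → ℕ) :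
    kstep i (extendChain c q S) = extendChain c q (kstep i S) := by
  funext x
  induction x using Sum.Lex.induction with
  | inl a =>
    have hreach (j : ℕ) :
        (∃ y, Relation.ReflTransGen (kstepAdj i (extendChain c q S)) (inlₗ a) y ∧
          extendChain c q S y = j) ↔
        ∃ b, Relation.ReflTransGen (kstepAdj i S) a b ∧ S b = j := by
      simp [reflTransGen_kstepAdj_extendChain_inl_iff hq hi]
    rw [kstep_apply, extendChain_inl, extendChain_inl, kstep_apply, hreach, hreach]
  | inr k => exact kstep_of_ne (by simp; omega) (by simp; omega)

lemma foldl_kstep_extendChain (hq : 1 ≤ q) {l : List ℕ} (hl : ∀ i ∈ l, i ≤ q) (S : P → ℕ) :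
    l.foldl (fun S i => kstep i S) (extendChain c q S) =
      extendChain c q (l.foldl (fun S i => kstep i S) S) := by
  induction l generalizing S with
  | nil => rfl
  | cons i l ih =>
    rw [List.foldl_cons, List.foldl_cons, kstep_extendChain hq (hl i List.mem_cons_self),
      ih (fun j hj => hl j (List.mem_cons_of_mem i hj))]

lemma kswaps_extendChain (hq : 1 ≤ q) (T : P → ℕ) :
    kswaps (q + c) (extendChain c q T) =
      (List.range' (q + 1) c).foldl (fun S i => kstep i S) (extendChain c q (kswaps q T)) := by
  have hsplit : List.range' 2 (q + c - 1) = List.range' 2 (q - 1) ++ List.range' (q + 1) c := by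
    rw [show q + 1 = 2 + (q - 1) by omega, List.range'_append_1,
      show q - 1 + c = q + c - 1 by omega]
  rw [kswaps, hsplit, List.foldl_append, foldl_kstep_extendChain hq]
  · rfl
  · intro j hj; rw [List.mem_range'_1] at hj; omega

end ExtendChain

/-- The labelling reached from `extendChain c q F` by the swaps `kstep (q + 1), …, kstep (q + s)`:
the labels `1` of `F` have become `q + 1`, and the hole has climbed to chain position `s - 1`. -/
def chainClimb {P : Type*} (c q : ℕ) (F : P → ℕ) (s : ℕ) : P ⊕ₗ Fin c → ℕ
  | inlₗ p => if F p = 1 ∧ 0 < s then q + 1 else F p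
  | inrₗ k => if k + 1 < s then q + 2 + k else if k + 1 = s then 1 else q + 1 + k

@[simp]
lemma chainClimb_inl {P : Type*} (c q : ℕ) (F : P → ℕ) (s : ℕ) (a : P) :
    chainClimb c q F s (inlₗ a) = if F a = 1 ∧ 0 < s then q + 1 else F a := rfl

@[simp]
lemma chainClimb_inr {P : Type*} (c q : ℕ) (F : P → ℕ) (s : ℕ) (k : Fin c) :
    chainClimb c q F s (inrₗ k) =
      if k + 1 < s then q + 2 + k else if k + 1 = s then 1 else q + 1 + k := rfl

lemma chainClimb_zero {P : Type*} (c q : ℕ) (F : P → ℕ) :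
    chainClimb c q F 0 = extendChain c q F := by
  funext x
  induction x using Sum.Lex.induction with
  | inl a => simp
  | inr k => simp

section ChainClimb

variable {P : Type*} [PartialOrder P] {c q s : ℕ} {F : P → ℕ}

lemma kstep_chainClimb_inl (hF : ∀ p, 1 ≤ F p ∧ F p ≤ q) (hmax : ∀ p, F p = 1 → IsMax p)
    (hs : s < c) (a : P) :
    kstep (q + 1 + s) (chainClimb c q F s) (inlₗ a) = chainClimb c q F (s + 1) (inlₗ a) := by
  have ha := hF a
  by_cases h0 : s = 0 ∧ F a = 1
  · obtain ⟨rfl, ha1⟩ := h0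
    have hmin : IsMin (⟨0, hs⟩ : Fin c) := fun _ _ => Nat.zero_le _
    rw [kstep_of_one_of_adj (y := inrₗ ⟨0, hs⟩) (by simp [ha1])
      (.inl (Sum.Lex.inl_covBy_inr (hmax a ha1) hmin)) (by simp)]
    simp [ha1]
  · rw [kstep_of_ne (by simp only [chainClimb_inl]; split_ifs <;> omega)
      (by simp only [chainClimb_inl]; split_ifs <;> omega)]
    simp only [chainClimb_inl]; split_ifs <;> omega

lemma kstep_chainClimb_inr (hmax : ∀ p, F p = 1 → IsMax p) (hex : ∃ p, F p = 1)
    (hs : s < c) (k : Fin c) :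
    kstep (q + 1 + s) (chainClimb c q F s) (inrₗ k) = chainClimb c q F (s + 1) (inrₗ k) := by
  have hk := k.isLt
  have hcov {j : Fin c} (h : (k : ℕ) + 1 = j ∨ (j : ℕ) + 1 = k) :
      (inrₗ k : P ⊕ₗ Fin c) ⋖ inrₗ j ∨ (inrₗ j : P ⊕ₗ Fin c) ⋖ inrₗ k := by
    simp only [Sum.Lex.inr_covBy_inr_iff, Fin.covBy_iff, Nat.covBy_iff_add_one_eq]; omega
  by_cases hks : (k : ℕ) + 1 = s
  · rw [kstep_of_one_of_adj (y := inrₗ ⟨s, hs⟩) (by simp [hks]) (hcov (.inl hks)) (by simp)]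
    simp only [chainClimb_inr]; split_ifs <;> omega
  by_cases hks' : (k : ℕ) = s
  · have hlabel : chainClimb c q F s (inrₗ k) = q + 1 + s := by
      simp only [chainClimb_inr]; split_ifs <;> omega
    have hnew : chainClimb c q F (s + 1) (inrₗ k) = 1 := by
      simp only [chainClimb_inr]; split_ifs <;> omega
    rw [hnew]
    rcases Nat.eq_zero_or_pos s with rfl | hs0
    · obtain ⟨p, hp⟩ := hex
      have hmin : IsMin k := fun _ _ => Fin.le_def.2 (by omega)
      exact kstep_of_eq_of_adj hlabel (.inr (Sum.Lex.inl_covBy_inr (hmax p hp) hmin))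
        (show chainClimb c q F 0 (inlₗ p) = 1 by simp [hp])
    · exact kstep_of_eq_of_adj (y := inrₗ ⟨s - 1, by omega⟩) hlabel
        (hcov (.inr (by simp; omega))) (by simp only [chainClimb_inr]; split_ifs <;> omega)
  · rw [kstep_of_ne (by simp only [chainClimb_inr]; split_ifs <;> omega)
      (by simp only [chainClimb_inr]; split_ifs <;> omega)]
    simp only [chainClimb_inr]; split_ifs <;> omega

lemma foldl_kstep_chainClimb (hF : ∀ p, 1 ≤ F p ∧ F p ≤ q) (hmax : ∀ p, F p = 1 → IsMax p)
    (hex : ∃ p, F p = 1) (hs : s ≤ c) :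
    (List.range' (q + 1) s).foldl (fun S i => kstep i S) (extendChain c q F) =
      chainClimb c q F s := by
  induction s with
  | zero => exact (chainClimb_zero c q F).symm
  | succ s ih =>
    rw [List.range'_1_concat, List.foldl_concat, ih (by omega)]
    funext x
    induction x using Sum.Lex.induction with
    | inl a => exact kstep_chainClimb_inl hF hmax hs a
    | inr k => exact kstep_chainClimb_inr hmax hex hs k

end ChainClimb

section KPromoExtendChain

variable {P : Type*} [PartialOrder P] [IsStronglyAtomic P] {c q : ℕ} {T : P → ℕ}

lemma kpromo_extendChain (hT : IsPackedTableau q T) (hq : 1 ≤ q) :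
    kpromo (q + c) (extendChain c q T) = extendChain c q (kpromo q T) := by
  have hS := hT.isKStage_kswaps hq
  have hclimb : kswaps (q + c) (extendChain c q T) = chainClimb c q (kswaps q T) c := by
    rw [kswaps_extendChain hq, foldl_kstep_chainClimb hS.bounds
      (fun _ => hS.isMax_of_eq_one hq) (hS.surj 1 le_rfl hq) le_rfl]
  funext x
  induction x using Sum.Lex.induction with
  | inl a =>
    have := hS.bounds a
    simp only [kpromo_apply, hclimb, chainClimb_inl, extendChain_inl]
    split_ifs <;> omega
  | inr k =>
    have := k.isLt
    simp only [kpromo_apply, hclimb, chainClimb_inr, extendChain_inr]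
    split_ifs <;> omega

lemma iterate_kpromo_extendChain (hT : IsPackedTableau q T) (hq : 1 ≤ q) (n : ℕ) :
    (kpromo (q + c))^[n] (extendChain c q T) = extendChain c q ((kpromo q)^[n] T) := by
  induction n generalizing T with
  | zero => rfl
  | succ n ih =>
    rw [Function.iterate_succ_apply, Function.iterate_succ_apply, kpromo_extendChain hT hq,
      ih (isPackedTableau_kpromo hT)]

lemma ncard_kpromo_orbit_extendChain (hT : IsPackedTableau q T) (hq : 1 ≤ q) :
    {S | ∃ n : ℕ, (kpromo (q + c))^[n] (extendChain c q T) = S}.ncard =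
      {S | ∃ n : ℕ, (kpromo q)^[n] T = S}.ncard := by
  change (Set.range fun n => _).ncard = (Set.range fun n => _).ncard
  simp_rw [iterate_kpromo_extendChain hT hq]
  rw [← Function.comp_def, Set.range_comp,
    Set.ncard_image_of_injective _ (extendChain_injective c q)]

end KPromoExtendChain

section ForcedChain

variable {P : Type*} [PartialOrder P] {c q' : ℕ} {U V : P ⊕ₗ Fin c → ℕ}

lemma IsPackedTableau.apply_inr_add (hU : IsPackedTableau q' U) (k : Fin c) :
    U (inrₗ k) + c = q' + 1 + k := by
  have hmono : StrictMono fun j : Fin c => U (inrₗ j) :=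
    fun _ _ h => hU.strictMono (Sum.Lex.inr_lt_inr_iff.2 h)
  have himage : (Finset.Ici k).image (fun j => U (inrₗ j)) = Finset.Icc (U (inrₗ k)) q' := by
    refine Finset.Subset.antisymm (fun v hv => ?_) (fun v hv => ?_)
    · obtain ⟨j, hj, rfl⟩ := Finset.mem_image.1 hv
      exact Finset.mem_Icc.2 ⟨hmono.monotone (Finset.mem_Ici.1 hj), (hU.bounds _).2⟩
    · obtain ⟨hkv, hvq⟩ := Finset.mem_Icc.1 hv
      obtain ⟨x, rfl⟩ := hU.surj v ((hU.bounds _).1.trans hkv) hvq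
      induction x using Sum.Lex.induction with
      | inl a => exact absurd (hU.strictMono (Sum.Lex.inl_lt_inr a k)) (not_lt.2 hkv)
      | inr j => exact Finset.mem_image_of_mem _ (Finset.mem_Ici.2 (hmono.le_iff_le.1 hkv))
  have hcard := congrArg Finset.card himage
  rw [Finset.card_image_of_injective _ hmono.injective, Fin.card_Ici, Nat.card_Icc] at hcard
  have := (hU.bounds (inrₗ k)).2
  have := k.isLt
  omega

lemma IsPackedTableau.exists_eq_extendChain (hU : IsPackedTableau q' U) :
    ∃ q, q' = q + c ∧ IsPackedTableau q (fun p => U (inlₗ p)) ∧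
      U = extendChain c q (fun p => U (inlₗ p)) := by
  have hcq : c ≤ q' := by
    rcases Nat.eq_zero_or_pos c with hc | hc
    · omega
    have h0 := hU.apply_inr_add ⟨0, hc⟩
    have := (hU.bounds (inrₗ ⟨0, hc⟩)).1
    rw [Fin.val_mk] at h0; omega
  have hchain (k : Fin c) : U (inrₗ k) = q' - c + 1 + k := by have := hU.apply_inr_add k; omega
  refine ⟨q' - c, by omega,
    ⟨fun p => ⟨(hU.bounds _).1, ?_⟩, fun a b h => ?_, fun j hj hjq => ?_⟩, ?_⟩
  · show U (inlₗ p) ≤ q' - c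
    by_contra hp
    rw [not_le] at hp
    have := (hU.bounds (inlₗ p)).2
    have hk : U (inlₗ p) - (q' - c) - 1 < c := by omega
    have : U (inlₗ p) < U (inrₗ ⟨_, hk⟩) := hU.strictMono (Sum.Lex.inl_lt_inr _ _)
    rw [hchain, Fin.val_mk] at this; omega
  · exact hU.strictMono (Sum.Lex.inl_lt_inl_iff.2 h)
  · obtain ⟨x, hx⟩ := hU.surj j hj (by omega)
    induction x using Sum.Lex.induction with
    | inl a => exact ⟨a, hx⟩
    | inr k => rw [hchain] at hx; omega
  · funext x
    induction x using Sum.Lex.induction with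
    | inl a => rfl
    | inr k => exact hchain k

lemma IsPackedTableau.eq_of_isEmpty [IsEmpty P] (hU : IsPackedTableau q' U)
    (hV : IsPackedTableau q' V) : U = V := by
  obtain ⟨q, hq, -, hU'⟩ := hU.exists_eq_extendChain
  obtain ⟨r, hr, -, hV'⟩ := hV.exists_eq_extendChain
  rw [hU', hV', show q = r by omega,
    Subsingleton.elim (fun p => U (inlₗ p)) (fun p => V (inlₗ p))]

end ForcedChain

/-- Let `P` be a finite graded poset of rank `ρ` such that for each alphabet size
`q ≥ ρ + 1` every `K`-promotion orbit of packed increasing tableaux in `Inc^q(P)` has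
cardinality dividing `m q`.  If `c` is such that `m q ∣ q + c` for all
`ρ + 1 ≤ q ≤ |P|`, then in the ordinal sum `P ⊕ 𝐜` every `K`-promotion orbit of
packed increasing tableaux has cardinality dividing its alphabet size. -/
theorem ordinal_sum_NRP {P : Type*} [PartialOrder P] [Fintype P]
    (ρ : ℕ) (rk : P → ℕ)
    (hrmin : ∀ x : P, (∀ y, ¬ y < x) → rk x = 0)
    (hrcov : ∀ x y : P, x ⋖ y → rk y = rk x + 1)
    (hrmax : ∀ x : P, (∀ y, ¬ x < y) → rk x = ρ)
    (c : ℕ) (m : ℕ → ℕ)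
    (hm : ∀ q : ℕ, ρ + 1 ≤ q → ∀ T : P → ℕ,
      (∀ p, 1 ≤ T p ∧ T p ≤ q) → (∀ x y : P, x < y → T x < T y) →
      (∀ i : ℕ, 1 ≤ i → i ≤ q → ∃ p, T p = i) →
      Set.ncard {S | ∃ n : ℕ, (kpromo q)^[n] T = S} ∣ m q)
    (hc : ∀ q : ℕ, ρ + 1 ≤ q → q ≤ Fintype.card P → m q ∣ q + c) :
    ∀ (q' : ℕ) (U : (P ⊕ₗ Fin c) → ℕ),
      (∀ p, 1 ≤ U p ∧ U p ≤ q') →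
      (∀ x y : P ⊕ₗ Fin c, x < y → U x < U y) →
      (∀ i : ℕ, 1 ≤ i → i ≤ q' → ∃ p, U p = i) →
      Set.ncard {S | ∃ n : ℕ, (kpromo q')^[n] U = S} ∣ q' := by
  intro q' U hbounds hmono hsurj
  have hU : IsPackedTableau q' U := ⟨hbounds, hmono, hsurj⟩
  obtain ⟨q, rfl, hT, hUT⟩ := hU.exists_eq_extendChain
  rcases isEmpty_or_nonempty P with _ | _
  · have hfix (n : ℕ) : (kpromo (q + c))^[n] U = U :=
      (isPackedTableau_iterate_kpromo hU n).eq_of_isEmpty hU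
    change (Set.range fun n => _).ncard ∣ _
    simp only [hfix, Set.range_const, Set.ncard_singleton, one_dvd]
  · have hρ : ρ + 1 ≤ q := hT.rank_lt_height hrmin hrcov hrmax
    rw [hUT, ncard_kpromo_orbit_extendChain hT (by omega)]
    exact (hm q hρ _ hT.bounds hT.strictMono hT.surj).trans (hc q hρ hT.height_le_card)
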